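/- Let K be a field, let n ≥ 1 and r ≥ 0 be integers, and let q ∈ K with q ≠ 0 and q^j ≠ 1 for all j = 1, …, 2n. Then ∑_{k=1}^n (−1)^k [n choose k]_q [n+k choose k]_q · q^{C(k,2) − (n−1)k} · S_k({2}^r; q)/(1 − q^k) = −∑_{k=1}^n (1 + q^k)·q^{rk}/(1 − q^k)^{2r+1}. -/
import Mathlib


/-- The Gaussian binomial coefficient `[m choose k]_q`, defined as
`((1−q^m)(1−q^{m−1})⋯(1−q^{m−k+1}))/((1−q^k)(1−q^{k−1})⋯(1−q))` for `0 ≤ k ≤ m`,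
and `0` otherwise. -/
def qbin {K : Type*} [Field K] (q : K) (m k : ℕ) : K :=
  if k ≤ m then
    (∏ i ∈ Finset.range k, (1 - q ^ (m - i))) / (∏ i ∈ Finset.range k, (1 - q ^ (i + 1)))
  else 0

/-- The `q`-analog of the non-strict multiple harmonic sum:
`S_n({t}^r; q) = ∑_{1 ≤ j₁ ≤ ⋯ ≤ j_r ≤ n} q^{j₁+⋯+j_r}/((1−q^{j₁})^t ⋯ (1−q^{j_r})^t)`,
defined by recursion on the number `r` of indices (summing over the largest index `j_r`). -/
def mhsq {K : Type*} [Field K] (q : K) (t : ℕ) : ℕ → ℕ → K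
  | 0, _ => 1
  | r + 1, n => ∑ j ∈ Finset.Icc 1 n, q ^ j / (1 - q ^ j) ^ t * mhsq q t r j

namespace Stmt17Aux

variable {K : Type*} [Field K]

/-- the telescoping factor -/
def tf (q : K) (n i : ℕ) : K :=
  -(q ^ i * (1 - q ^ (n - i)) * (1 - q ^ (n + i))) / (q ^ n * (1 - q ^ i) ^ 2)

/-- the auxiliary hypergeometric-type term -/
def uf (q : K) (n k : ℕ) : K := ∏ i ∈ Finset.Icc 1 (k - 1), tf q n i

lemma uf_one (q : K) (n : ℕ) : uf q n 1 = 1 := by simp [uf]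

lemma uf_succ (q : K) (n k : ℕ) (hk : 1 ≤ k) :
    uf q n (k + 1) = uf q n k * tf q n k := by
  unfold uf
  rw [show k + 1 - 1 = (k - 1) + 1 by omega,
    Finset.prod_Icc_succ_top (by omega), show k - 1 + 1 = k by omega]

lemma tf_self (q : K) (n : ℕ) : tf q n n = 0 := by simp [tf]

lemma uf_top (q : K) (n : ℕ) (hn : 1 ≤ n) : uf q n (n + 1) = 0 := by
  rw [uf_succ q n n hn, tf_self, mul_zero]

/-- the key telescoping step -/
lemma step (q : K) (n j : ℕ) (hj1 : 1 ≤ j) (hjn : j ≤ n) (hq0 : q ≠ 0)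
    (hj : 1 - q ^ j ≠ 0) (hn : 1 - q ^ n ≠ 0) :
    q ^ n / (1 - q ^ n) ^ 2 * (1 - tf q n j) = q ^ j / (1 - q ^ j) ^ 2 := by
  have hc : q ^ (n - j) = q ^ n / q ^ j := by
    rw [pow_sub₀ q hq0 hjn, div_eq_mul_inv]
  have hnk : q ^ (n + j) = q ^ n * q ^ j := pow_add q n j
  have hqj : q ^ j ≠ 0 := pow_ne_zero _ hq0
  have hqn : q ^ n ≠ 0 := pow_ne_zero _ hq0
  rw [tf, hc, hnk]
  field_simp
  ring


lemma telescope (f : ℕ → K) : ∀ m i : ℕ, i ≤ m + 1 →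
    ∑ j ∈ Finset.Icc i m, (f j - f (j + 1)) = f i - f (m + 1) := by
  intro m
  induction m with
  | zero => intro i hi; interval_cases i <;> simp
  | succ m ih =>
    intro i hi
    rcases Nat.lt_or_ge i (m + 2) with h | h
    · rw [Finset.sum_Icc_succ_top (by omega), ih i (by omega)]; ring
    · have : i = m + 2 := by omega
      subst this
      simp


lemma tail (q : K) (n : ℕ) (hn1 : 1 ≤ n) (hq0 : q ≠ 0)
    (hnz : ∀ j, 1 ≤ j → j ≤ n → 1 - q ^ j ≠ 0) (i : ℕ) (hi1 : 1 ≤ i) (hin : i ≤ n + 1) :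
    ∑ j ∈ Finset.Icc i n, q ^ j / (1 - q ^ j) ^ 2 * uf q n j
      = q ^ n / (1 - q ^ n) ^ 2 * uf q n i := by
  have T := telescope (fun j => q ^ n / (1 - q ^ n) ^ 2 * uf q n j) n i hin
  rw [uf_top q n hn1, mul_zero, sub_zero] at T
  rw [← T]
  apply Finset.sum_congr rfl
  intro j hj
  simp only [Finset.mem_Icc] at hj
  have hj1 : 1 ≤ j := le_trans hi1 hj.1
  rw [uf_succ q n j hj1]
  have hstep := step q n j hj1 hj.2 hq0 (hnz j hj1 hj.2) (hnz n hn1 le_rfl)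
  calc q ^ j / (1 - q ^ j) ^ 2 * uf q n j
      = (q ^ n / (1 - q ^ n) ^ 2 * (1 - tf q n j)) * uf q n j := by rw [hstep]
    _ = _ := by ring

lemma lemC (q : K) (n : ℕ) (hn1 : 1 ≤ n) (hq0 : q ≠ 0)
    (hnz : ∀ j, 1 ≤ j → j ≤ n → 1 - q ^ j ≠ 0) :
    ∀ r : ℕ, ∑ j ∈ Finset.Icc 1 n, q ^ j / (1 - q ^ j) ^ 2 * uf q n j * mhsq q 2 r j
      = q ^ (n * (r + 1)) / (1 - q ^ n) ^ (2 * (r + 1)) := by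
  intro r
  induction r with
  | zero =>
    simp only [mhsq, mul_one]
    rw [tail q n hn1 hq0 hnz 1 le_rfl (by omega), uf_one, mul_one]
    norm_num
  | succ r ih =>
    have hswap : ∑ j ∈ Finset.Icc 1 n, q ^ j / (1 - q ^ j) ^ 2 * uf q n j * mhsq q 2 (r+1) j
        = ∑ i ∈ Finset.Icc 1 n, ∑ j ∈ Finset.Icc i n,
            (q ^ j / (1 - q ^ j) ^ 2 * uf q n j) * (q ^ i / (1 - q ^ i) ^ 2 * mhsq q 2 r i) := by
      rw [← Finset.sum_comm' (s := Finset.Icc 1 n) (t := fun j => Finset.Icc 1 j)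
        (t' := Finset.Icc 1 n) (s' := fun i => Finset.Icc i n) ?_]
      · apply Finset.sum_congr rfl
        intro j hj
        rw [show mhsq q 2 (r+1) j
            = ∑ i ∈ Finset.Icc 1 j, q ^ i / (1 - q ^ i) ^ 2 * mhsq q 2 r i from rfl,
          Finset.mul_sum]
      · intro j i
        simp only [Finset.mem_Icc]
        omega
    rw [hswap]
    have : ∀ i ∈ Finset.Icc 1 n, ∑ j ∈ Finset.Icc i n,
            (q ^ j / (1 - q ^ j) ^ 2 * uf q n j) * (q ^ i / (1 - q ^ i) ^ 2 * mhsq q 2 r i)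
        = q ^ n / (1 - q ^ n) ^ 2 * (q ^ i / (1 - q ^ i) ^ 2 * uf q n i * mhsq q 2 r i) := by
      intro i hi
      simp only [Finset.mem_Icc] at hi
      rw [← Finset.sum_mul, tail q n hn1 hq0 hnz i hi.1 (by omega)]
      ring
    rw [Finset.sum_congr rfl this, ← Finset.mul_sum, ih]
    have e1 : n + n * (r + 1) = n * (r + 1 + 1) := by ring
    have e2 : 2 + 2 * (r + 1) = 2 * (r + 1 + 1) := by ring
    rw [div_mul_div_comm, ← pow_add, ← pow_add, e1, e2]


-- numerator manipulation lemmas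
lemma prodN1 (q : K) (n k : ℕ) (hk : 1 ≤ k) :
    ∏ i ∈ Finset.range k, (1 - q ^ (n - i))
      = (1 - q ^ n) * ∏ i ∈ Finset.range (k - 1), (1 - q ^ (n - 1 - i)) := by
  obtain ⟨k', rfl⟩ : ∃ k', k = k' + 1 := ⟨k - 1, by omega⟩
  rw [Finset.prod_range_succ' (fun i => 1 - q ^ (n - i)) k']
  simp only [Nat.add_succ_sub_one]
  rw [mul_comm]
  congr 1
  apply Finset.prod_congr rfl
  intro i _
  congr 2
  omega

lemma prodRefl (q : K) (n k' : ℕ) :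
    ∏ i ∈ Finset.range k', (1 - q ^ (n + k' - i))
      = ∏ i ∈ Finset.range k', (1 - q ^ (n + 1 + i)) := by
  rw [← Finset.prod_range_reflect (fun i => 1 - q ^ (n + 1 + i)) k']
  apply Finset.prod_congr rfl
  intro i hi
  simp only [Finset.mem_range] at hi
  congr 2
  omega

lemma prodN2 (q : K) (n k : ℕ) (hk : 1 ≤ k) :
    ∏ i ∈ Finset.range k, (1 - q ^ (n + k - i))
      = (∏ i ∈ Finset.range (k - 1), (1 - q ^ (n + 1 + i))) * (1 - q ^ (n + k)) := by
  obtain ⟨k', rfl⟩ : ∃ k', k = k' + 1 := ⟨k - 1, by omega⟩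
  rw [Finset.prod_range_succ' (fun i => 1 - q ^ (n + (k' + 1) - i)) k']
  simp only [Nat.add_sub_cancel, Nat.add_succ_sub_one]
  congr 1
  rw [← prodRefl q n k']
  apply Finset.prod_congr rfl
  intro i hi
  simp only [Finset.mem_range] at hi
  congr 2
  omega

lemma prodN3 (q : K) (n k : ℕ) (hk : 1 ≤ k) :
    ∏ i ∈ Finset.range k, (1 - q ^ (n - 1 - i))
      = (∏ i ∈ Finset.range (k - 1), (1 - q ^ (n - 1 - i))) * (1 - q ^ (n - k)) := by
  obtain ⟨k', rfl⟩ : ∃ k', k = k' + 1 := ⟨k - 1, by omega⟩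
  rw [Finset.prod_range_succ]
  simp only [Nat.add_sub_cancel]
  congr 3
  omega

lemma prodN4 (q : K) (n k : ℕ) (hk : 1 ≤ k) (hn : 1 ≤ n) :
    ∏ i ∈ Finset.range k, (1 - q ^ (n - 1 + k - i))
      = (1 - q ^ n) * ∏ i ∈ Finset.range (k - 1), (1 - q ^ (n + 1 + i)) := by
  obtain ⟨k', rfl⟩ : ∃ k', k = k' + 1 := ⟨k - 1, by omega⟩
  rw [Finset.prod_range_succ]
  simp only [Nat.add_sub_cancel]
  rw [mul_comm]
  congr 1
  · congr 2
    omega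
  · rw [← prodRefl q n k']
    apply Finset.prod_congr rfl
    intro i hi
    simp only [Finset.mem_range] at hi
    congr 2
    omega

lemma prodD (q : K) (k : ℕ) (hk : 1 ≤ k) :
    ∏ i ∈ Finset.range k, (1 - q ^ (i + 1))
      = (∏ i ∈ Finset.range (k - 1), (1 - q ^ (i + 1))) * (1 - q ^ k) := by
  obtain ⟨k', rfl⟩ : ∃ k', k = k' + 1 := ⟨k - 1, by omega⟩
  rw [Finset.prod_range_succ]
  simp


-- qbin closed forms
lemma qbinF1 (q : K) (n k : ℕ) (hk : 1 ≤ k) (hkn : k ≤ n) :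
    qbin q n k = (1 - q ^ n) * (∏ i ∈ Finset.range (k - 1), (1 - q ^ (n - 1 - i)))
      / ∏ i ∈ Finset.range k, (1 - q ^ (i + 1)) := by
  rw [qbin, if_pos hkn, prodN1 q n k hk]

lemma qbinF2 (q : K) (n k : ℕ) (hk : 1 ≤ k) :
    qbin q (n + k) k = (∏ i ∈ Finset.range (k - 1), (1 - q ^ (n + 1 + i))) * (1 - q ^ (n + k))
      / ∏ i ∈ Finset.range k, (1 - q ^ (i + 1)) := by
  rw [qbin, if_pos (by omega), prodN2 q n k hk]

lemma qbinF3 (q : K) (n k : ℕ) (hk : 1 ≤ k) (hkn : k ≤ n) :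
    qbin q (n - 1) k = (∏ i ∈ Finset.range (k - 1), (1 - q ^ (n - 1 - i))) * (1 - q ^ (n - k))
      / ∏ i ∈ Finset.range k, (1 - q ^ (i + 1)) := by
  rcases Nat.lt_or_ge k n with h | h
  · rw [qbin, if_pos (by omega), prodN3 q n k hk]
  · have hkn' : k = n := by omega
    subst hkn'
    rw [qbin, if_neg (by omega)]
    simp

lemma qbinF4 (q : K) (n k : ℕ) (hk : 1 ≤ k) (hn : 1 ≤ n) :
    qbin q (n - 1 + k) k = (1 - q ^ n) * (∏ i ∈ Finset.range (k - 1), (1 - q ^ (n + 1 + i)))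
      / ∏ i ∈ Finset.range k, (1 - q ^ (i + 1)) := by
  rw [qbin, if_pos (by omega), prodN4 q n k hk hn]

-- closed form for uf
lemma ufCF (q : K) (n : ℕ) (hq0 : q ≠ 0)
    (hnz : ∀ j, 1 ≤ j → j ≤ n → 1 - q ^ j ≠ 0) :
    ∀ k, 1 ≤ k → k ≤ n →
    uf q n k = (-1 : K) ^ (k - 1) * q ^ (k.choose 2) * (q ^ (n * (k - 1)))⁻¹
      * (∏ i ∈ Finset.range (k - 1), (1 - q ^ (n - 1 - i)))
      * (∏ i ∈ Finset.range (k - 1), (1 - q ^ (n + 1 + i)))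
      * ((∏ i ∈ Finset.range (k - 1), (1 - q ^ (i + 1))) ^ 2)⁻¹ := by
  intro k
  induction k with
  | zero => omega
  | succ k ih =>
    intro _ hkn
    rcases Nat.lt_or_ge k 1 with h | h
    · have : k = 0 := by omega
      subst this
      simp [uf_one]
    · have hkn' : k ≤ n := by omega
      have IH := ih h hkn'
      obtain ⟨k', rfl⟩ : ∃ k', k = k' + 1 := ⟨k - 1, by omega⟩
      rw [uf_succ q n (k' + 1) h, IH, tf]
      have hP : ∏ i ∈ Finset.range (k' + 1), (1 - q ^ (n - 1 - i))
          = (∏ i ∈ Finset.range k', (1 - q ^ (n - 1 - i))) * (1 - q ^ (n - (k' + 1))) := by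
        rw [Finset.prod_range_succ]
        congr 3
        omega
      have hQ : ∏ i ∈ Finset.range (k' + 1), (1 - q ^ (n + 1 + i))
          = (∏ i ∈ Finset.range k', (1 - q ^ (n + 1 + i))) * (1 - q ^ (n + (k' + 1))) := by
        rw [Finset.prod_range_succ]
        congr 3
        omega
      have hE : ∏ i ∈ Finset.range (k' + 1), (1 - q ^ (i + 1))
          = (∏ i ∈ Finset.range k', (1 - q ^ (i + 1))) * (1 - q ^ (k' + 1)) :=
        Finset.prod_range_succ _ _
      have hch : (k' + 1 + 1).choose 2 = (k' + 1).choose 2 + (k' + 1) := by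
        rw [Nat.choose_succ_succ]
        simp [Nat.add_comm]
      have hmul : n * (k' + 1 + 1 - 1) = n * (k' + 1 - 1) + n := by
        have : k' + 1 + 1 - 1 = (k' + 1 - 1) + 1 := by omega
        rw [this, Nat.mul_succ]
      rw [hch, hmul]
      simp only [Nat.add_sub_cancel] at *
      rw [hP, hQ, hE, pow_add, pow_add, pow_add]
      have hEz : (∏ i ∈ Finset.range k', (1 - q ^ (i + 1))) ≠ 0 := by
        apply Finset.prod_ne_zero_iff.mpr
        intro i hi
        simp only [Finset.mem_range] at hi
        exact hnz (i + 1) (by omega) (by omega)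
      have hk1z : (1 - q ^ (k' + 1)) ≠ 0 := hnz (k' + 1) (by omega) (by omega)
      have hqn : (q : K) ^ n ≠ 0 := pow_ne_zero _ hq0
      have hqnk : (q : K) ^ (n * k') ≠ 0 := pow_ne_zero _ hq0
      field_simp
      ring


def cterm (q : K) (n k : ℕ) : K :=
  (-1 : K) ^ k * qbin q n k * qbin q (n + k) k * q ^ ((k.choose 2 : ℤ) - ((n : ℤ) - 1) * k)

lemma zlem1 (q : K) (hq0 : q ≠ 0) (n k : ℕ) :
    q ^ ((k.choose 2 : ℤ) - ((n : ℤ) - 1) * k)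
      = q ^ (k.choose 2 + k) * (q ^ (n * k))⁻¹ := by
  have h : (k.choose 2 : ℤ) - ((n : ℤ) - 1) * k
      = ((k.choose 2 + k : ℕ) : ℤ) - ((n * k : ℕ) : ℤ) := by push_cast; ring
  rw [h, zpow_sub₀ hq0, zpow_natCast, zpow_natCast, div_eq_mul_inv]

lemma zlem2 (q : K) (hq0 : q ≠ 0) (n k : ℕ) (hn1 : 1 ≤ n) :
    q ^ ((k.choose 2 : ℤ) - ((↑(n - 1) : ℤ) - 1) * k)
      = q ^ (k.choose 2 + k) * (q ^ (n * k))⁻¹ * q ^ k := by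
  have h : (k.choose 2 : ℤ) - ((↑(n - 1) : ℤ) - 1) * k
      = ((k.choose 2 + k + k : ℕ) : ℤ) - ((n * k : ℕ) : ℤ) := by
    rw [Nat.cast_sub hn1]
    push_cast
    ring
  rw [h, zpow_sub₀ hq0, zpow_natCast, zpow_natCast, pow_add, div_eq_mul_inv]
  ring

lemma genCancel (a b c y E S C P Q : K) (ha : a ≠ 0) (hc : c ≠ 0)
    (hy : y ≠ 0) (hE : E ≠ 0) :
    -(1 - a * a) * b / a * (S * C * c⁻¹ * P * Q * (E ^ 2)⁻¹) / y * (E ^ 2 * y ^ 2 * c * a)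
      = -(1 - a * a) * b * (S * C * P * Q) * y := by
  have h1 : a * a⁻¹ = 1 := mul_inv_cancel₀ ha
  have h2 : c * c⁻¹ = 1 := mul_inv_cancel₀ hc
  have h3 : y * y⁻¹ = 1 := mul_inv_cancel₀ hy
  have h4 : E ^ 2 * (E ^ 2)⁻¹ = 1 := mul_inv_cancel₀ (pow_ne_zero 2 hE)
  calc -(1 - a * a) * b / a * (S * C * c⁻¹ * P * Q * (E ^ 2)⁻¹) / y * (E ^ 2 * y ^ 2 * c * a)
      = (-(1 - a * a) * b * S * C * P * Q * y)
          * ((a * a⁻¹) * (c * c⁻¹) * (y * y⁻¹) * (E ^ 2 * (E ^ 2)⁻¹)) := by ring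
    _ = -(1 - a * a) * b * (S * C * P * Q) * y := by rw [h1, h2, h3, h4]; ring

lemma lemD (q : K) (n k : ℕ) (hn1 : 1 ≤ n) (hk1 : 1 ≤ k) (hkn : k ≤ n) (hq0 : q ≠ 0)
    (hnz : ∀ j, 1 ≤ j → j ≤ 2 * n → 1 - q ^ j ≠ 0) :
    cterm q n k - cterm q (n - 1) k
      = -(1 - q ^ (2 * n)) * q ^ k / q ^ n * uf q n k / (1 - q ^ k) := by
  have hnz' : ∀ j, 1 ≤ j → j ≤ n → 1 - q ^ j ≠ 0 := fun j h1 h2 => hnz j h1 (by omega)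
  unfold cterm
  rw [qbinF1 q n k hk1 hkn, qbinF2 q n k hk1, qbinF3 q n k hk1 hkn, qbinF4 q n k hk1 hn1,
    ufCF q n hq0 hnz' k hk1 hkn, zlem1 q hq0 n k, zlem2 q hq0 n k hn1]
  have hnk : n * k = n * (k - 1) + n := by
    have h : k - 1 + 1 = k := by omega
    calc n * k = n * (k - 1 + 1) := by rw [h]
      _ = n * (k - 1) + n := by ring
  have h2n : 2 * n = n + n := by omega
  rw [hnk, h2n, pow_add q (n * (k - 1)) n, pow_add q n n, pow_add q n k,
    pow_add q (k.choose 2) k, prodD q k hk1]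
  have hsign : (-1 : K) ^ k = -(-1 : K) ^ (k - 1) := by
    conv_lhs => rw [show k = (k - 1) + 1 by omega]
    rw [pow_succ]
    ring
  rw [hsign]
  have hEz : (∏ i ∈ Finset.range (k - 1), (1 - q ^ (i + 1))) ≠ 0 := by
    apply Finset.prod_ne_zero_iff.mpr
    intro i hi
    simp only [Finset.mem_range] at hi
    exact hnz (i + 1) (by omega) (by omega)
  have hkz : (1 - q ^ k) ≠ 0 := hnz k hk1 (by omega)
  have hqn : (q : K) ^ n ≠ 0 := pow_ne_zero _ hq0
  have hqk : (q : K) ^ k ≠ 0 := pow_ne_zero _ hq0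
  have hqnk : (q : K) ^ (n * (k - 1)) ≠ 0 := pow_ne_zero _ hq0
  set P := ∏ i ∈ Finset.range (k - 1), (1 - q ^ (n - 1 - i)) with hP
  set Q := ∏ i ∈ Finset.range (k - 1), (1 - q ^ (n + 1 + i)) with hQ
  set E := ∏ i ∈ Finset.range (k - 1), (1 - q ^ (i + 1)) with hE
  set W : K := E ^ 2 * (1 - q ^ k) ^ 2 * q ^ (n * (k - 1)) * q ^ n with hW
  have hWz : W ≠ 0 := by
    apply mul_ne_zero (mul_ne_zero (mul_ne_zero (pow_ne_zero _ hEz) (pow_ne_zero _ hkz)) hqnk) hqn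
  apply mul_right_cancel₀ hWz
  rw [sub_mul]
  have hcb : q ^ (n - k) * q ^ k = q ^ n := by
    rw [← pow_add]
    congr 1
    omega
  have e1 : -(-1 : K) ^ (k - 1) * ((1 - q ^ n) * P / (E * (1 - q ^ k)))
        * (Q * (1 - q ^ n * q ^ k) / (E * (1 - q ^ k)))
        * (q ^ k.choose 2 * q ^ k * (q ^ (n * (k - 1)) * q ^ n)⁻¹) * W
      = -(-1 : K) ^ (k - 1) * (1 - q ^ n) * P * Q * (1 - q ^ n * q ^ k)
          * q ^ k.choose 2 * q ^ k := by
    rw [hW]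
    field_simp
  have e2 : -(-1 : K) ^ (k - 1) * (P * (1 - q ^ (n - k)) / (E * (1 - q ^ k)))
        * ((1 - q ^ n) * Q / (E * (1 - q ^ k)))
        * (q ^ k.choose 2 * q ^ k * (q ^ (n * (k - 1)) * q ^ n)⁻¹ * q ^ k) * W
      = -(-1 : K) ^ (k - 1) * P * (1 - q ^ (n - k)) * (1 - q ^ n) * Q
          * q ^ k.choose 2 * q ^ k * q ^ k := by
    rw [hW]
    field_simp
  have e3 : -(1 - q ^ n * q ^ n) * q ^ k / q ^ n
        * ((-1 : K) ^ (k - 1) * q ^ k.choose 2 * (q ^ (n * (k - 1)))⁻¹ * P * Q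
            * (E ^ 2)⁻¹) / (1 - q ^ k) * W
      = -(1 - q ^ n * q ^ n) * q ^ k * ((-1 : K) ^ (k - 1) * q ^ k.choose 2 * P * Q)
          * (1 - q ^ k) := by
    rw [hW]
    exact genCancel (q ^ n) (q ^ k) (q ^ (n * (k - 1))) (1 - q ^ k) E ((-1 : K) ^ (k - 1))
      (q ^ k.choose 2) P Q hqn hqnk hkz hEz
  rw [e1, e2, e3]
  linear_combination (-(-1 : K) ^ (k - 1) * P * Q * q ^ k.choose 2 * q ^ k * (1 - q ^ n)) * hcb


lemma lemR (q : K) (n : ℕ) (r : ℕ) (hn1 : 1 ≤ n) (hq0 : q ≠ 0)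
    (hnz : ∀ j, 1 ≤ j → j ≤ 2 * n → 1 - q ^ j ≠ 0) :
    ∑ k ∈ Finset.Icc 1 n, (cterm q n k - cterm q (n - 1) k) * (mhsq q 2 r k / (1 - q ^ k))
      = -((1 + q ^ n) * q ^ (r * n) / (1 - q ^ n) ^ (2 * r + 1)) := by
  have hnz' : ∀ j, 1 ≤ j → j ≤ n → 1 - q ^ j ≠ 0 := fun j h1 h2 => hnz j h1 (by omega)
  have hstep : ∀ k ∈ Finset.Icc 1 n,
      (cterm q n k - cterm q (n - 1) k) * (mhsq q 2 r k / (1 - q ^ k))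
        = -(1 - q ^ (2 * n)) / q ^ n * (q ^ k / (1 - q ^ k) ^ 2 * uf q n k * mhsq q 2 r k) := by
    intro k hk
    simp only [Finset.mem_Icc] at hk
    rw [lemD q n k hn1 hk.1 hk.2 hq0 hnz]
    set y : K := 1 - q ^ k with hy
    clear_value y
    ring
  rw [Finset.sum_congr rfl hstep, ← Finset.mul_sum, lemC q n hn1 hq0 hnz' r]
  have h2n : q ^ (2 * n) = q ^ n * q ^ n := by rw [two_mul, pow_add]
  have hnr : q ^ (n * (r + 1)) = q ^ (r * n) * q ^ n := by
    rw [← pow_add]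
    congr 1
    ring
  have hee : (1 - q ^ n) ^ (2 * (r + 1)) = (1 - q ^ n) ^ (2 * r + 1) * (1 - q ^ n) := by
    rw [← pow_succ, show 2 * r + 1 + 1 = 2 * (r + 1) by omega]
  have hqn : (q : K) ^ n ≠ 0 := pow_ne_zero _ hq0
  have hyn : (1 : K) - q ^ n ≠ 0 := hnz n hn1 (by omega)
  have hynp : ((1 : K) - q ^ n) ^ (2 * r + 1) ≠ 0 := pow_ne_zero _ hyn
  rw [h2n, hnr, hee]
  field_simp
  ring

lemma mainAux (q : K) (hq0 : q ≠ 0) : ∀ n : ℕ,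
    (∀ j, 1 ≤ j → j ≤ 2 * n → 1 - q ^ j ≠ 0) → ∀ r : ℕ,
    ∑ k ∈ Finset.Icc 1 n, cterm q n k * (mhsq q 2 r k / (1 - q ^ k))
      = -∑ k ∈ Finset.Icc 1 n, (1 + q ^ k) * q ^ (r * k) / (1 - q ^ k) ^ (2 * r + 1) := by
  intro n
  induction n with
  | zero => intro _ r; simp
  | succ n ih =>
    intro hnz r
    have hnz' : ∀ j, 1 ≤ j → j ≤ 2 * n → 1 - q ^ j ≠ 0 := fun j h1 h2 => hnz j h1 (by omega)
    have IH := ih hnz' r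
    have key := lemR q (n + 1) r (by omega) hq0 hnz
    simp only [Nat.add_sub_cancel] at key
    have hzero : cterm q n (n + 1) = 0 := by
      unfold cterm qbin
      rw [if_neg (by omega)]
      ring
    have split : ∑ k ∈ Finset.Icc 1 (n + 1), cterm q (n + 1) k * (mhsq q 2 r k / (1 - q ^ k))
        = ∑ k ∈ Finset.Icc 1 (n + 1),
            ((cterm q (n + 1) k - cterm q n k) * (mhsq q 2 r k / (1 - q ^ k))
              + cterm q n k * (mhsq q 2 r k / (1 - q ^ k))) := by
      apply Finset.sum_congr rfl
      intro k _
      ring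
    rw [split, Finset.sum_add_distrib, key,
      Finset.sum_Icc_succ_top (by omega : 1 ≤ n + 1)
        (fun k => cterm q n k * (mhsq q 2 r k / (1 - q ^ k))), hzero, zero_mul, add_zero, IH,
      Finset.sum_Icc_succ_top (by omega : 1 ≤ n + 1)
        (fun k => (1 + q ^ k) * q ^ (r * k) / (1 - q ^ k) ^ (2 * r + 1))]
    ring


end Stmt17Aux

theorem stmt17 {K : Type*} [Field K] (n : ℕ) (hn : 1 ≤ n) (r : ℕ) (q : K) (hq0 : q ≠ 0)
    (hq : ∀ j, 1 ≤ j → j ≤ 2 * n → q ^ j ≠ 1) :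
    ∑ k ∈ Finset.Icc 1 n,
        (-1 : K) ^ k * qbin q n k * qbin q (n + k) k *
          q ^ ((k.choose 2 : ℤ) - (n - 1 : ℤ) * k) * (mhsq q 2 r k / (1 - q ^ k))
      = -∑ k ∈ Finset.Icc 1 n, (1 + q ^ k) * q ^ (r * k) / (1 - q ^ k) ^ (2 * r + 1) := by
  have hnz : ∀ j, 1 ≤ j → j ≤ 2 * n → 1 - q ^ j ≠ 0 := fun j h1 h2 =>
    sub_ne_zero_of_ne (Ne.symm (hq j h1 h2))
  have := Stmt17Aux.mainAux q hq0 n hnz r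
  simpa only [Stmt17Aux.cterm] using this
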